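/- Let d ≥ 2, κ > 0, ε > 0, c > 0, and define f(k) = ⌊ exp( (2/c)^d (log k)^d ) ⌋. Then for all sufficiently large k, f(k) · log 2 − (κ + ε/4) · f(k) / (log f(k))^{2/d} ≥ f(k+1) · log 2 − (κ + ε/2) · f(k+1) / (log f(k+1))^{2/d}. -/

import Mathlib

open Filter

namespace BRWTraps

/-- The sparse time sequence `f(k) = ⌊exp((2/c)^d (log k)^d)⌋`. -/
noncomputable def fseq (c : ℝ) (d : ℕ) (k : ℕ) : ℕ :=
  ⌊Real.exp ((2 / c) ^ d * Real.log k ^ d)⌋₊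

private lemma pow_sub_pow_le_aux {x y : ℝ} (hx : 0 ≤ x) (hxy : x ≤ y) (n : ℕ) :
    y ^ (n + 1) - x ^ (n + 1) ≤ ((n : ℝ) + 1) * y ^ n * (y - x) := by
  induction n with
  | zero => simp
  | succ n ih =>
    have hy : 0 ≤ y := hx.trans hxy
    have hxn : x ^ (n + 1) ≤ y ^ (n + 1) := pow_le_pow_left₀ hx hxy _
    have hyp : 0 ≤ y ^ n := pow_nonneg hy n
    have heq : y ^ (n + 1 + 1) - x ^ (n + 1 + 1)
        = y * (y ^ (n + 1) - x ^ (n + 1)) + x ^ (n + 1) * (y - x) := by ring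
    have h1 : y * (y ^ (n + 1) - x ^ (n + 1)) ≤ y * (((n : ℝ) + 1) * y ^ n * (y - x)) :=
      mul_le_mul_of_nonneg_left ih hy
    have h2 : x ^ (n + 1) * (y - x) ≤ y ^ (n + 1) * (y - x) :=
      mul_le_mul_of_nonneg_right hxn (by linarith)
    have heq2 : y * (((n : ℝ) + 1) * y ^ n * (y - x)) + y ^ (n + 1) * (y - x)
        = (((n : ℕ) + 1 : ℕ) + 1 : ℝ) * y ^ (n + 1) * (y - x) := by push_cast; ring
    linarith

/-- Monotonicity of `x ↦ x / (log x)^p` for `x ≥ 3` when `0 < p ≤ 1`. -/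
private lemma div_log_rpow_mono {p x y : ℝ} (hp0 : 0 < p) (hp1 : p ≤ 1)
    (hx : 3 ≤ x) (hxy : x ≤ y) :
    x / Real.log x ^ p ≤ y / Real.log y ^ p := by
  have hx0 : (0 : ℝ) < x := by linarith
  have hy0 : (0 : ℝ) < y := by linarith
  have he3 : Real.exp 1 ≤ 3 := by
    have := Real.exp_one_lt_d9; linarith
  have hlx : 1 ≤ Real.log x := (Real.le_log_iff_exp_le hx0).2 (he3.trans hx)
  have hly : 1 ≤ Real.log y := (Real.le_log_iff_exp_le hy0).2 (he3.trans (hx.trans hxy))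
  have hlx0 : 0 < Real.log x := by linarith
  have hly0 : 0 < Real.log y := by linarith
  have hlxy : Real.log x ≤ Real.log y := Real.log_le_log hx0 hxy
  have key : x * Real.log y ≤ y * Real.log x := by
    have h := Real.log_div_self_antitoneOn
      (show x ∈ {t : ℝ | Real.exp 1 ≤ t} from he3.trans hx)
      (show y ∈ {t : ℝ | Real.exp 1 ≤ t} from he3.trans (hx.trans hxy)) hxy
    rw [div_le_div_iff₀ hy0 hx0] at h
    linarith
  set q := Real.log y / Real.log x with hq
  have hq1 : 1 ≤ q := (one_le_div hlx0).2 hlxy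
  have hqp : q ^ p ≤ q := by
    calc q ^ p ≤ q ^ (1 : ℝ) := Real.rpow_le_rpow_of_exponent_le hq1 hp1
      _ = q := Real.rpow_one q
  have hLp : 0 < Real.log x ^ p := Real.rpow_pos_of_pos hlx0 p
  have hsplit : Real.log y ^ p = Real.log x ^ p * q ^ p := by
    rw [← Real.mul_rpow hlx0.le (by positivity)]
    congr 1
    rw [mul_comm, div_mul_cancel₀ _ hlx0.ne']
  have hxq : x * q ≤ y := by
    rw [hq, ← mul_div_assoc, div_le_iff₀ hlx0]
    linarith
  rw [div_le_div_iff₀ (by positivity) (by positivity), hsplit]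
  calc x * (Real.log x ^ p * q ^ p) ≤ x * (Real.log x ^ p * q) :=
        mul_le_mul_of_nonneg_left (mul_le_mul_of_nonneg_left hqp hLp.le) hx0.le
    _ = Real.log x ^ p * (x * q) := by ring
    _ ≤ Real.log x ^ p * y := mul_le_mul_of_nonneg_left hxq hLp.le
    _ = y * Real.log x ^ p := by ring

set_option maxHeartbeats 2000000 in
theorem fseq_level_comparison (d : ℕ) (hd : 2 ≤ d) (κ ε c : ℝ)
    (hκ : 0 < κ) (hε : 0 < ε) (hc : 0 < c) :
    ∀ᶠ k : ℕ in atTop,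
      (fseq c d (k + 1) : ℝ) * Real.log 2 -
          (κ + ε / 2) * (fseq c d (k + 1) : ℝ) /
            Real.log (fseq c d (k + 1) : ℝ) ^ ((2 : ℝ) / d)
        ≤ (fseq c d k : ℝ) * Real.log 2 -
            (κ + ε / 4) * (fseq c d k : ℝ) /
              Real.log (fseq c d k : ℝ) ^ ((2 : ℝ) / d) := by
  have hd0 : (0 : ℝ) < d := by exact_mod_cast Nat.lt_of_lt_of_le two_pos hd |>.trans_le (le_refl _)
  set A : ℝ := (2 / c) ^ d with hAdef
  have hA0 : 0 < A := pow_pos (by positivity) d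
  set p : ℝ := 2 / (d : ℝ) with hpdef
  have hp0 : 0 < p := by positivity
  have hp1 : p ≤ 1 := by
    rw [hpdef, div_le_one hd0]
    exact_mod_cast hd
  have hAp0 : 0 < A ^ p := Real.rpow_pos_of_pos hA0 p
  -- constants
  set C2 : ℝ := A * d * 2 ^ (d - 1) with hC2def
  have hC20 : 0 < C2 := by positivity
  set C3 : ℝ := Real.exp 1 * Real.log 2 * A * A ^ p * d * 2 ^ (d - 1) with hC3def
  have hlog2 : 0 < Real.log 2 := Real.log_pos (by norm_num)
  have hC30 : 0 < C3 := by positivity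
  set M : ℝ := 1 + 16 / A ^ 2 + 2 * (16 * Real.log 2 * A ^ p / ε) / A ^ 2 with hMdef
  -- tendsto facts
  have hlogtend : Tendsto (fun k : ℕ => Real.log k) atTop atTop :=
    Real.tendsto_log_atTop.comp tendsto_natCast_atTop_atTop
  have hdiv : ∀ m : ℕ, Tendsto (fun k : ℕ => Real.log k ^ m / (k : ℝ)) atTop (nhds 0) := by
    intro m
    have h := Real.tendsto_pow_log_div_mul_add_atTop 1 0 m one_ne_zero
    simp only [one_mul, add_zero] at h
    exact h.comp tendsto_natCast_atTop_atTop
  have E0 : ∀ᶠ k : ℕ in atTop, (3 : ℝ) ≤ (k : ℝ) := by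
    filter_upwards [eventually_ge_atTop 3] with k hk
    exact_mod_cast hk
  have E2 : ∀ᶠ k : ℕ in atTop, C2 * (Real.log k ^ (d - 1) / (k : ℝ)) ≤ 1 := by
    have h : Tendsto (fun k : ℕ => C2 * (Real.log k ^ (d - 1) / (k : ℝ))) atTop (nhds 0) := by
      simpa using (hdiv (d - 1)).const_mul C2
    exact h.eventually_le_const one_pos
  have E3 : ∀ᶠ k : ℕ in atTop, C3 * (Real.log k ^ (d + 1) / (k : ℝ)) ≤ ε / 16 := by
    have h : Tendsto (fun k : ℕ => C3 * (Real.log k ^ (d + 1) / (k : ℝ))) atTop (nhds 0) := by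
      simpa using (hdiv (d + 1)).const_mul C3
    exact h.eventually_le_const (by positivity)
  have E4 : ∀ᶠ k : ℕ in atTop, M ≤ Real.log k := hlogtend.eventually_ge_atTop M
  filter_upwards [E0, E2, E3, E4] with k h3k h2 h3 hM
  -- notation
  set t : ℝ := Real.log k with htdef
  set t' : ℝ := Real.log ((k : ℕ) + 1 : ℕ) with ht'def
  have hk0 : (0 : ℝ) < (k : ℝ) := by linarith
  have hM1 : (1 : ℝ) ≤ M := by
    rw [hMdef]
    have : 0 ≤ 16 / A ^ 2 := by positivity
    have h2 : 0 ≤ 2 * (16 * Real.log 2 * A ^ p / ε) / A ^ 2 := by positivity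
    linarith
  have ht1 : 1 ≤ t := hM1.trans hM
  have ht0 : 0 < t := by linarith
  have htt' : t ≤ t' := by
    rw [htdef, ht'def]
    apply Real.log_le_log hk0
    push_cast
    linarith
  have ht'0 : 0 < t' := lt_of_lt_of_le ht0 htt'
  have ht'2t : t' ≤ 2 * t := by
    rw [ht'def, htdef]
    have h1 : ((k : ℕ) + 1 : ℕ) ≤ ((k : ℕ) * k : ℕ) := by
      have : 3 ≤ k := by exact_mod_cast h3k
      nlinarith
    calc Real.log ((k : ℕ) + 1 : ℕ) ≤ Real.log ((k : ℕ) * k : ℕ) := by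
          apply Real.log_le_log (by push_cast; linarith)
          exact_mod_cast h1
      _ = 2 * Real.log k := by
          push_cast
          rw [Real.log_mul hk0.ne' hk0.ne']
          ring
  -- g and f
  set g : ℝ := Real.exp (A * t ^ d) with hgdef
  set g' : ℝ := Real.exp (A * t' ^ d) with hg'def
  have hg0 : 0 < g := Real.exp_pos _
  set F : ℝ := (fseq c d k : ℝ) with hFdef
  set F' : ℝ := (fseq c d (k + 1) : ℝ) with hF'def
  have hFg : F ≤ g := by
    rw [hFdef, fseq]
    exact Nat.floor_le (Real.exp_pos _).le
  have hF'g' : F' ≤ g' := by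
    rw [hF'def, fseq]
    exact Nat.floor_le (Real.exp_pos _).le
  have hgF : g - 1 < F := by
    rw [hFdef, fseq]
    exact Nat.sub_one_lt_floor _
  have hgg' : g ≤ g' := by
    apply Real.exp_le_exp.2
    apply mul_le_mul_of_nonneg_left _ hA0.le
    exact pow_le_pow_left₀ ht0.le htt' d
  have hFF' : F ≤ F' := by
    rw [hFdef, hF'def]
    exact_mod_cast Nat.floor_mono hgg'
  -- g is large
  have hg_big : 16 * Real.log 2 * A ^ p * t ^ 2 / ε ≤ g ∧ 8 ≤ g := by
    have htd : t ^ 2 ≤ t ^ d := pow_le_pow_right₀ ht1 hd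
    have h1 : Real.exp (A * t ^ 2) ≤ g := by
      rw [hgdef]
      exact Real.exp_le_exp.2 (mul_le_mul_of_nonneg_left htd hA0.le)
    have h2 : (A * t ^ 2) ^ 2 / 2 ≤ Real.exp (A * t ^ 2) := by
      have hq := Real.quadratic_le_exp_of_nonneg (by positivity : (0:ℝ) ≤ A * t ^ 2)
      have hy : (0:ℝ) ≤ A * t ^ 2 := by positivity
      linarith
    have ht2t : t ≤ t ^ 2 := by
      rw [sq]; exact le_mul_of_one_le_left ht0.le ht1
    have h1t2 : (1:ℝ) ≤ t ^ 2 := by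
      calc (1:ℝ) = 1 ^ 2 := by norm_num
        _ ≤ t ^ 2 := pow_le_pow_left₀ (by norm_num) ht1 2
    have hMa : 16 / A ^ 2 ≤ t := by
      refine le_trans ?_ hM
      rw [hMdef]
      have : (0:ℝ) ≤ 2 * (16 * Real.log 2 * A ^ p / ε) / A ^ 2 := by positivity
      linarith
    have hMb : 2 * (16 * Real.log 2 * A ^ p / ε) / A ^ 2 ≤ t := by
      refine le_trans ?_ hM
      rw [hMdef]
      have : (0:ℝ) ≤ 16 / A ^ 2 := by positivity
      linarith
    constructor
    · have h4 : 2 * (16 * Real.log 2 * A ^ p / ε) ≤ A ^ 2 * t := by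
        rw [div_le_iff₀ (by positivity)] at hMb
        linarith
      have h5 : (A * t ^ 2) ^ 2 / 2 = A ^ 2 * t ^ 2 * t ^ 2 / 2 := by ring
      rw [div_le_iff₀ hε]
      have h6 : A ^ 2 * t ≤ A ^ 2 * t ^ 2 :=
        mul_le_mul_of_nonneg_left ht2t (by positivity)
      have h7 : 16 * Real.log 2 * A ^ p / ε * t ^ 2 ≤ A ^ 2 * t ^ 2 * t ^ 2 / 2 := by
        have h7a : 16 * Real.log 2 * A ^ p / ε ≤ A ^ 2 * t ^ 2 / 2 := by linarith
        have h7b := mul_le_mul_of_nonneg_right h7a (sq_nonneg t)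
        linarith
      have h8 : 16 * Real.log 2 * A ^ p * t ^ 2 = (16 * Real.log 2 * A ^ p / ε * t ^ 2) * ε := by
        field_simp
      rw [h8]
      calc (16 * Real.log 2 * A ^ p / ε * t ^ 2) * ε ≤ (A ^ 2 * t ^ 2 * t ^ 2 / 2) * ε := by
            exact mul_le_mul_of_nonneg_right h7 hε.le
        _ ≤ g * ε := by
            apply mul_le_mul_of_nonneg_right _ hε.le
            rw [← h5]
            exact h2.trans h1
    · have h4 : 16 ≤ A ^ 2 * t := by
        rw [div_le_iff₀ (by positivity)] at hMa
        linarith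
      have ht2t2 : t ≤ t ^ 2 * t ^ 2 := by
        calc t = t * 1 := (mul_one t).symm
          _ ≤ t ^ 2 * t ^ 2 := mul_le_mul ht2t h1t2 zero_le_one (sq_nonneg t)
      have h6 : A ^ 2 * t ≤ A ^ 2 * (t ^ 2 * t ^ 2) :=
        mul_le_mul_of_nonneg_left ht2t2 (by positivity)
      have h5 : (A * t ^ 2) ^ 2 / 2 = A ^ 2 * (t ^ 2 * t ^ 2) / 2 := by ring
      linarith
  obtain ⟨hg_eps, hg8⟩ := hg_big
  have hF3 : 3 ≤ F := by linarith
  have hF'3 : 3 ≤ F' := hF3.trans hFF'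
  have hFg2 : g / 2 ≤ F := by linarith
  -- logs of F
  have hlF0 : 0 < Real.log F := Real.log_pos (by linarith)
  have hlF'0 : 0 < Real.log F' := Real.log_pos (by linarith)
  have hlFg : Real.log F ≤ A * t ^ d := by
    calc Real.log F ≤ Real.log g := Real.log_le_log (by linarith) hFg
      _ = A * t ^ d := Real.log_exp _
  have hlFp : Real.log F ^ p ≤ A ^ p * t ^ 2 := by
    calc Real.log F ^ p ≤ (A * t ^ d) ^ p := Real.rpow_le_rpow hlF0.le hlFg hp0.le
      _ = A ^ p * (t ^ d) ^ p := Real.mul_rpow hA0.le (by positivity)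
      _ = A ^ p * t ^ 2 := by
          congr 1
          rw [← Real.rpow_natCast t d, ← Real.rpow_mul ht0.le]
          rw [show (d : ℝ) * p = 2 by rw [hpdef]; field_simp]
          rw [show (2:ℝ) = ((2:ℕ):ℝ) by norm_num, Real.rpow_natCast]
  have hlFp0 : 0 < Real.log F ^ p := Real.rpow_pos_of_pos hlF0 p
  -- monotonicity step
  have h_mono : F / Real.log F ^ p ≤ F' / Real.log F' ^ p :=
    div_log_rpow_mono hp0 hp1 hF3 hFF'
  -- increment bound
  set δ : ℝ := C2 * (t ^ (d - 1) / (k : ℝ)) with hδdef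
  have hδ0 : 0 ≤ δ := by positivity
  have hδ1 : δ ≤ 1 := h2
  set Δ : ℝ := A * (t' ^ d - t ^ d) with hΔdef
  have hΔ0 : 0 ≤ Δ := by
    have : t ^ d ≤ t' ^ d := pow_le_pow_left₀ ht0.le htt' d
    rw [hΔdef]
    exact mul_nonneg hA0.le (by linarith)
  have hΔδ : Δ ≤ δ := by
    have hd1 : d - 1 + 1 = d := by omega
    have c1 : t' ^ d - t ^ d ≤ (((d - 1 : ℕ) : ℝ) + 1) * t' ^ (d - 1) * (t' - t) := by
      have := pow_sub_pow_le_aux ht0.le htt' (d - 1)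
      rwa [hd1] at this
    have hcast : ((d - 1 : ℕ) : ℝ) + 1 = (d : ℝ) := by
      rw [Nat.cast_sub (by omega : 1 ≤ d)]
      ring
    rw [hcast] at c1
    have c2 : t' - t ≤ 1 / (k : ℝ) := by
      have hlog : t' - t = Real.log (((k : ℝ) + 1) / (k : ℝ)) := by
        rw [ht'def, htdef, Real.log_div (by positivity) hk0.ne']
        push_cast
        ring
      rw [hlog]
      have h := Real.log_le_sub_one_of_pos (show (0:ℝ) < ((k : ℝ) + 1) / (k : ℝ) by positivity)
      have : ((k : ℝ) + 1) / (k : ℝ) - 1 = 1 / (k : ℝ) := by field_simp; ring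
      linarith
    have c3 : t' ^ (d - 1) ≤ 2 ^ (d - 1) * t ^ (d - 1) := by
      calc t' ^ (d - 1) ≤ (2 * t) ^ (d - 1) := pow_le_pow_left₀ ht'0.le ht'2t _
        _ = 2 ^ (d - 1) * t ^ (d - 1) := mul_pow 2 t (d - 1)
    have c4 : (d : ℝ) * t' ^ (d - 1) * (t' - t) ≤ (d : ℝ) * (2 ^ (d - 1) * t ^ (d - 1)) * (1 / (k : ℝ)) := by
      apply mul_le_mul _ c2 (by linarith) (by positivity)
      exact mul_le_mul_of_nonneg_left c3 (by positivity)
    have c5 : t' ^ d - t ^ d ≤ (d : ℝ) * (2 ^ (d - 1) * t ^ (d - 1)) * (1 / (k : ℝ)) :=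
      c1.trans c4
    rw [hΔdef, hδdef, hC2def]
    calc A * (t' ^ d - t ^ d) ≤ A * ((d : ℝ) * (2 ^ (d - 1) * t ^ (d - 1)) * (1 / (k : ℝ))) :=
          mul_le_mul_of_nonneg_left c5 hA0.le
      _ = A * (d : ℝ) * 2 ^ (d - 1) * (t ^ (d - 1) / (k : ℝ)) := by ring
  have hexpΔ : Real.exp Δ - 1 ≤ δ * Real.exp 1 := by
    have e1 : Real.exp Δ - 1 ≤ Δ * Real.exp Δ := by
      have h := Real.add_one_le_exp (-Δ)
      rw [Real.exp_neg] at h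
      have hpos := Real.exp_pos Δ
      have := mul_le_mul_of_nonneg_left h hpos.le
      rw [mul_inv_cancel₀ hpos.ne'] at this
      linarith [this]
    have e2 : Real.exp Δ ≤ Real.exp 1 := Real.exp_le_exp.2 (hΔδ.trans hδ1)
    calc Real.exp Δ - 1 ≤ Δ * Real.exp Δ := e1
      _ ≤ δ * Real.exp 1 := mul_le_mul hΔδ e2 (Real.exp_pos _).le hδ0
  have hg'g : g' ≤ g + g * δ * Real.exp 1 := by
    have : g' = g * Real.exp Δ := by
      rw [hgdef, hg'def, ← Real.exp_add, hΔdef]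
      congr 1
      ring
    rw [this]
    have := mul_le_mul_of_nonneg_left hexpΔ hg0.le
    linarith [this]
  have hF'F : F' - F ≤ g * δ * Real.exp 1 + 1 := by
    have : F' ≤ g + g * δ * Real.exp 1 := hF'g'.trans hg'g
    linarith
  -- the core inequality: (F' - F) * log 2 ≤ ε/4 * (F / (log F)^p)
  have hT2 : 0 < A ^ p * t ^ 2 := by positivity
  have ha : g * δ * Real.exp 1 * Real.log 2 ≤ ε / 16 * (g / (A ^ p * t ^ 2)) := by
    rw [show ε / 16 * (g / (A ^ p * t ^ 2)) = (ε / 16 * g) / (A ^ p * t ^ 2) by ring,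
      le_div_iff₀ hT2]
    have hpow : t ^ (d - 1) * t ^ 2 = t ^ (d + 1) := by
      rw [← pow_add]
      congr 1
      omega
    have heq : g * δ * Real.exp 1 * Real.log 2 * (A ^ p * t ^ 2)
        = g * (C3 * (t ^ (d + 1) / (k : ℝ))) := by
      rw [hδdef, hC2def, hC3def, ← hpow]
      ring
    rw [heq]
    have := mul_le_mul_of_nonneg_left h3 hg0.le
    linarith
  have hb : Real.log 2 ≤ ε / 16 * (g / (A ^ p * t ^ 2)) := by
    rw [show ε / 16 * (g / (A ^ p * t ^ 2)) = (ε * g) / (16 * (A ^ p * t ^ 2)) by ring,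
      le_div_iff₀ (by positivity)]
    rw [div_le_iff₀ hε] at hg_eps
    linarith [hg_eps]
  have hfl : g / 2 / (A ^ p * t ^ 2) ≤ F / Real.log F ^ p :=
    div_le_div₀ (by linarith) hFg2 hlFp0 hlFp
  have h_gap : F' * Real.log 2 - F * Real.log 2 ≤ ε / 4 * (F / Real.log F ^ p) := by
    have s1 : F' * Real.log 2 - F * Real.log 2 = (F' - F) * Real.log 2 := by ring
    have s2 : (F' - F) * Real.log 2 ≤ (g * δ * Real.exp 1 + 1) * Real.log 2 :=
      mul_le_mul_of_nonneg_right hF'F hlog2.le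
    have s3 : (g * δ * Real.exp 1 + 1) * Real.log 2 ≤ ε / 4 * (g / 2 / (A ^ p * t ^ 2)) := by
      have : (g * δ * Real.exp 1 + 1) * Real.log 2
          = g * δ * Real.exp 1 * Real.log 2 + Real.log 2 := by ring
      rw [this]
      have : ε / 4 * (g / 2 / (A ^ p * t ^ 2)) = ε / 16 * (g / (A ^ p * t ^ 2))
          + ε / 16 * (g / (A ^ p * t ^ 2)) := by ring
      rw [this]
      linarith
    have s4 : ε / 4 * (g / 2 / (A ^ p * t ^ 2)) ≤ ε / 4 * (F / Real.log F ^ p) :=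
      mul_le_mul_of_nonneg_left hfl (by positivity)
    linarith
  -- assemble
  have h_mono' : (κ + ε / 2) * (F / Real.log F ^ p) ≤ (κ + ε / 2) * (F' / Real.log F' ^ p) :=
    mul_le_mul_of_nonneg_left h_mono (by linarith)
  show F' * Real.log 2 - (κ + ε / 2) * F' / Real.log F' ^ p
      ≤ F * Real.log 2 - (κ + ε / 4) * F / Real.log F ^ p
  rw [mul_div_assoc, mul_div_assoc]
  linarith [h_mono', h_gap]

end BRWTraps
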